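/- Let N ≥ 2, let M satisfy 1 ≤ M ≤ N/2 with M even, and let w be a nonzero real number. Then vertices 1 and N of the modified path P_N^{(M,w)} are not strongly cospectral; in particular, 0 is an eigenvalue of its adjacency matrix A admitting one eigenvector v₊ with v₊(1) = v₊(N) ≠ 0 and another eigenvector v₋ with v₋(1) = −v₋(N) ≠ 0. -/

import Mathlib

open Matrix Polynomial

/-- `E` is the orthogonal projection matrix onto the eigenspace `{v : A v = θ v}`:
it is symmetric, idempotent, its range is contained in the eigenspace, and it fixes
the eigenspace pointwise. -/
def IsEigenprojection {V : Type*} [Fintype V] [DecidableEq V]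
    (A : Matrix V V ℝ) (θ : ℝ) (E : Matrix V V ℝ) : Prop :=
  E.IsSymm ∧ E * E = E ∧ (∀ v : V → ℝ, A *ᵥ (E *ᵥ v) = θ • (E *ᵥ v)) ∧
    (∀ v : V → ℝ, A *ᵥ v = θ • v → E *ᵥ v = v)

/-- Vertices `x` and `y` are strongly cospectral: for every eigenvalue `θ` of `A`,
`E_θ e_x = ± E_θ e_y`. -/
def StronglyCospectral {V : Type*} [Fintype V] [DecidableEq V]
    (A : Matrix V V ℝ) (x y : V) : Prop :=
  ∀ (θ : ℝ) (E : Matrix V V ℝ), IsEigenprojection A θ E →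
    E *ᵥ Pi.single x 1 = E *ᵥ Pi.single y 1 ∨ E *ᵥ Pi.single x 1 = -(E *ᵥ Pi.single y 1)

/-- The adjacency matrix of the modified path `P_N^{(M,w)}` on vertices `0, 1, …, N+1`:
a path on vertices `1, …, N`, with extra vertex `0` joined to vertex `M` and extra vertex
`N+1` joined to vertex `N+1-M`, each by an edge of weight `w`. -/
def modPathAdj (N M : ℕ) (w : ℝ) : Matrix (Fin (N + 2)) (Fin (N + 2)) ℝ :=
  Matrix.of fun i j =>
    if (1 ≤ (i : ℕ) ∧ (i : ℕ) ≤ N - 1 ∧ (j : ℕ) = (i : ℕ) + 1) ∨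
       (1 ≤ (j : ℕ) ∧ (j : ℕ) ≤ N - 1 ∧ (i : ℕ) = (j : ℕ) + 1) then 1
    else if ((i : ℕ) = 0 ∧ (j : ℕ) = M) ∨ ((j : ℕ) = 0 ∧ (i : ℕ) = M) then w
    else if ((i : ℕ) = N + 1 - M ∧ (j : ℕ) = N + 1) ∨
            ((j : ℕ) = N + 1 - M ∧ (i : ℕ) = N + 1) then w
    else 0

/-!
If `x` and `y` are strongly cospectral, then for each eigenvalue `θ` there is one sign `ε` with
`z x = ε z y` for every `θ`-eigenvector `z`, because `z x = z ⬝ᵥ E_θ e_x`. So it suffices to find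
two null vectors of `A`, one with `z 1 = z N ≠ 0` and one with `z 1 = -z N ≠ 0`.

Put `ℓ k = sin (k π / 2)` on the path vertices `1, …, M`, zero on `M + 1, …, N + 1`, and choose
`ℓ 0` so that the row of vertex `M` vanishes. The rows of the other path vertices vanish by the
recurrence `ℓ (k - 1) + ℓ (k + 1) = 0`, and those of `0` and `M + 1` because `ℓ M = 0` for even
`M`. Then `ℓ 1 = 1` and `ℓ N = 0`, and since `k ↦ N + 1 - k` is an automorphism of the graph,
`ℓ ± ℓ ∘ rev` are the two required null vectors.
-/

section Eigenprojection

variable {V : Type*} [Fintype V] [DecidableEq V]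

open WithLp in
theorem exists_isEigenprojection (A : Matrix V V ℝ) (θ : ℝ) : ∃ E, IsEigenprojection A θ E := by
  set K := Module.End.eigenspace (toEuclideanLin A) θ
  have hK : ∀ v : V → ℝ, toLp 2 v ∈ K ↔ A *ᵥ v = θ • v := fun v => by
    rw [Module.End.mem_eigenspace_iff, toLpLin_toLp]
    exact (toLp_injective 2).eq_iff
  set E := toEuclideanLin.symm K.starProjection.toLinearMap
  have hE : ∀ v, E *ᵥ v = ofLp (K.starProjection (toLp 2 v)) := fun v => by
    rw [← toLin'_apply, ← ofLp_toLpLin (p := 2), LinearEquiv.apply_symm_apply]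
    rfl
  refine ⟨E, ?_, ?_, fun v => ?_, fun v hv => ?_⟩
  · exact isHermitian_iff_isSymm.1 <| isSymmetric_toEuclideanLin_iff.1 <| by
      simpa [E] using K.starProjection_isSymmetric
  · rw [← toLpLin_symm_comp, ← Module.End.mul_eq_comp,
      (ContinuousLinearMap.IsIdempotentElem.toLinearMap K.isIdempotentElem_starProjection).eq]
  · rw [hE, ← hK]
    exact K.starProjection_apply_mem (toLp 2 v)
  · rw [hE, Submodule.starProjection_eq_self_iff.2 ((hK v).2 hv)]

variable {A : Matrix V V ℝ} {θ : ℝ}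

theorem IsEigenprojection.dotProduct_mulVec_single {E : Matrix V V ℝ}
    (hE : IsEigenprojection A θ E) {z : V → ℝ} (hz : A *ᵥ z = θ • z) (x : V) :
    z ⬝ᵥ (E *ᵥ Pi.single x 1) = z x := by
  rw [dotProduct_mulVec, ← mulVec_transpose, hE.1.eq, hE.2.2.2 z hz, dotProduct_single, mul_one]

theorem not_stronglyCospectral_of_eigenvectors {x y : V} {u v : V → ℝ}
    (hu : A *ᵥ u = θ • u) (huxy : u x = u y) (hux : u x ≠ 0)
    (hv : A *ᵥ v = θ • v) (hvxy : v x = -v y) (hvx : v x ≠ 0) :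
    ¬ StronglyCospectral A x y := by
  intro h
  obtain ⟨E, hE⟩ := exists_isEigenprojection A θ
  rcases h θ E hE with hxy | hxy
  · have := congrArg (v ⬝ᵥ ·) hxy
    simp only [hE.dotProduct_mulVec_single hv] at this
    exact hvx (by linarith)
  · have := congrArg (u ⬝ᵥ ·) hxy
    simp only [dotProduct_neg, hE.dotProduct_mulVec_single hu] at this
    exact hux (by linarith)

end Eigenprojection

theorem exists_eigenvectors_of_comp {V : Type*} [Fintype V] {A : Matrix V V ℝ} {θ : ℝ}
    {σ : V → V} {x y : V} (hσx : σ x = y) (hσy : σ y = x)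
    {ℓ : V → ℝ} (hℓ : A *ᵥ ℓ = θ • ℓ) (hℓσ : A *ᵥ (ℓ ∘ σ) = θ • (ℓ ∘ σ))
    (hx : ℓ x ≠ 0) (hy : ℓ y = 0) :
    (∃ u : V → ℝ, u ≠ 0 ∧ A *ᵥ u = θ • u ∧ u x = u y ∧ u x ≠ 0) ∧
    (∃ v : V → ℝ, v ≠ 0 ∧ A *ᵥ v = θ • v ∧ v x = -v y ∧ v x ≠ 0) := by
  have hne : ∀ u : V → ℝ, u x ≠ 0 → u ≠ 0 := fun u hu h => hu (by rw [h, Pi.zero_apply])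
  have hu : (ℓ + ℓ ∘ σ) x ≠ 0 := by simpa [hσx, hy] using hx
  have hv : (ℓ - ℓ ∘ σ) x ≠ 0 := by simpa [hσx, hy] using hx
  exact ⟨⟨_, hne _ hu, by rw [mulVec_add, hℓ, hℓσ, smul_add], by simp [hσx, hσy, add_comm], hu⟩,
    ⟨_, hne _ hv, by rw [mulVec_sub, hℓ, hℓσ, smul_sub], by simp [hσx, hσy], hv⟩⟩

theorem Fin.sum_univ_ite_and_val_eq {α : Type*} [AddCommMonoid α] {n c : ℕ}
    (P : Prop) [Decidable P] (g : ℕ → α) (h : P → c < n) :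
    ∑ j : Fin n, (if P ∧ (j : ℕ) = c then g j else 0) = if P then g c else 0 := by
  rw [Fin.sum_univ_eq_sum_range (fun b => if P ∧ b = c then g b else 0)]
  by_cases hP : P <;> simp [hP, h]

section ModPath

variable {N M : ℕ} (w : ℝ)

theorem modPathAdj_apply_mul (hM : 1 ≤ M) (hMN : M ≤ N) (u : ℕ → ℝ) (i j : Fin (N + 2)) :
    modPathAdj N M w i j * u j =
      (if (2 ≤ (i : ℕ) ∧ (i : ℕ) ≤ N) ∧ (j : ℕ) = i - 1 then u j else 0)
      + (if (1 ≤ (i : ℕ) ∧ (i : ℕ) + 1 ≤ N) ∧ (j : ℕ) = i + 1 then u j else 0)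
      + w * ((if (i : ℕ) = 0 ∧ (j : ℕ) = M then u j else 0)
        + (if (i : ℕ) = M ∧ (j : ℕ) = 0 then u j else 0)
        + (if (i : ℕ) = N + 1 - M ∧ (j : ℕ) = N + 1 then u j else 0)
        + (if (i : ℕ) = N + 1 ∧ (j : ℕ) = N + 1 - M then u j else 0)) := by
  simp only [modPathAdj, of_apply, ← ite_or]
  by_cases hpath : (1 ≤ (i : ℕ) ∧ (i : ℕ) ≤ N - 1 ∧ (j : ℕ) = i + 1) ∨
      (1 ≤ (j : ℕ) ∧ (j : ℕ) ≤ N - 1 ∧ (i : ℕ) = j + 1)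
  · rw [if_pos hpath]
    rcases hpath with h | h <;> simp (disch := omega) only [if_pos, if_neg] <;> ring
  rw [if_neg hpath]
  by_cases hpendant : (((i : ℕ) = 0 ∧ (j : ℕ) = M) ∨ ((j : ℕ) = 0 ∧ (i : ℕ) = M)) ∨
      (((i : ℕ) = N + 1 - M ∧ (j : ℕ) = N + 1) ∨ ((j : ℕ) = N + 1 - M ∧ (i : ℕ) = N + 1))
  · rw [if_pos hpendant]
    rcases hpendant with (h | h) | (h | h) <;> simp (disch := omega) only [if_pos, if_neg] <;> ring
  rw [if_neg hpendant]
  simp (disch := omega) only [if_neg]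
  ring

-- Vectors are given as functions on `ℕ`, so that the neighbours `i ± 1` need no `Fin` arithmetic.
theorem modPathAdj_mulVec_apply (hM : 1 ≤ M) (hMN : M ≤ N) (u : ℕ → ℝ) (i : Fin (N + 2)) :
    (modPathAdj N M w *ᵥ fun j => u j) i =
      (if 2 ≤ (i : ℕ) ∧ (i : ℕ) ≤ N then u (i - 1) else 0)
      + (if 1 ≤ (i : ℕ) ∧ (i : ℕ) + 1 ≤ N then u (i + 1) else 0)
      + w * ((if (i : ℕ) = 0 then u M else 0) + (if (i : ℕ) = M then u 0 else 0)
        + (if (i : ℕ) = N + 1 - M then u (N + 1) else 0)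
        + (if (i : ℕ) = N + 1 then u (N + 1 - M) else 0)) := by
  simp only [mulVec, dotProduct, modPathAdj_apply_mul w hM hMN, Finset.sum_add_distrib,
    ← Finset.mul_sum]
  rw [Fin.sum_univ_ite_and_val_eq _ _ (by omega), Fin.sum_univ_ite_and_val_eq _ _ (by omega),
    Fin.sum_univ_ite_and_val_eq _ _ (by omega), Fin.sum_univ_ite_and_val_eq _ _ (by omega),
    Fin.sum_univ_ite_and_val_eq _ _ (by omega), Fin.sum_univ_ite_and_val_eq _ _ (by omega)]

theorem modPathAdj_rev_rev (hMN : M ≤ N + 1) (i j : Fin (N + 2)) :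
    modPathAdj N M w i.rev j.rev = modPathAdj N M w i j := by
  simp only [modPathAdj, of_apply, Fin.val_rev, ← ite_or]
  exact if_congr (by omega) rfl (if_congr (by omega) rfl rfl)

theorem modPathAdj_mulVec_comp_rev (hMN : M ≤ N + 1) (v : Fin (N + 2) → ℝ) :
    modPathAdj N M w *ᵥ (v ∘ Fin.rev) = (modPathAdj N M w *ᵥ v) ∘ Fin.rev := by
  ext i
  simp only [mulVec, dotProduct, Function.comp_apply]
  rw [← Equiv.sum_comp Fin.revPerm]
  refine Fintype.sum_congr _ _ fun j => ?_
  rw [Fin.revPerm_apply, Fin.rev_rev, ← modPathAdj_rev_rev w hMN i.rev, Fin.rev_rev]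

end ModPath

/-- `nullSeq k = sin (k π / 2)`. -/
def nullSeq : ℕ → ℝ
  | 0 => 0
  | 1 => 1
  | k + 2 => -nullSeq k

theorem nullSeq_add_two (k : ℕ) : nullSeq (k + 2) = -nullSeq k := rfl

theorem nullSeq_of_even {k : ℕ} (hk : Even k) : nullSeq k = 0 := by
  obtain ⟨m, rfl⟩ := hk
  induction m with
  | zero => rfl
  | succ m ih => rw [show m + 1 + (m + 1) = m + m + 2 by omega, nullSeq_add_two, ih, neg_zero]

noncomputable def leftNullVec (M : ℕ) (w : ℝ) (k : ℕ) : ℝ :=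
  if k = 0 then -nullSeq (M - 1) / w else if k ≤ M then nullSeq k else 0

theorem leftNullVec_one {M : ℕ} (hM : 1 ≤ M) (w : ℝ) : leftNullVec M w 1 = 1 := by
  simp [leftNullVec, hM, nullSeq]

theorem leftNullVec_of_lt {M k : ℕ} (w : ℝ) (hk : M < k) : leftNullVec M w k = 0 := by
  simp [leftNullVec, hk.not_ge, (Nat.zero_le M).trans_lt hk |>.ne']

theorem modPathAdj_mulVec_leftNullVec {N M : ℕ} (hM : 1 ≤ M) (hMe : Even M) (hMN : 2 * M ≤ N)
    {w : ℝ} (hw : w ≠ 0) : modPathAdj N M w *ᵥ (fun j => leftNullVec M w j) = 0 := by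
  have hM2 : 2 ≤ M := by obtain ⟨k, rfl⟩ := hMe; omega
  ext i
  rw [modPathAdj_mulVec_apply w hM (by omega), Pi.zero_apply]
  obtain h | h | h | h | h | h : (i : ℕ) = 0 ∨ (i : ℕ) = 1 ∨ (2 ≤ (i : ℕ) ∧ (i : ℕ) < M) ∨
      (i : ℕ) = M ∨ (i : ℕ) = M + 1 ∨ M + 1 < (i : ℕ) := by omega
  all_goals simp (disch := omega) only [leftNullVec, if_pos, if_neg, if_true, ite_self, add_zero,
    zero_add, mul_zero]
  · rw [nullSeq_of_even hMe, mul_zero]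
  · rw [h]
    exact nullSeq_of_even even_two
  · rw [show (i : ℕ) + 1 = (i - 1) + 2 by omega, nullSeq_add_two, add_neg_cancel]
  · rw [h, mul_div_cancel₀ _ hw, add_neg_cancel]
  · rw [h, Nat.add_sub_cancel, nullSeq_of_even hMe]

theorem stmt_9 (N M : ℕ) (hM1 : 1 ≤ M) (hM2 : 2 * M ≤ N)
    (hMe : Even M) (w : ℝ) (hw : w ≠ 0) :
    ¬ StronglyCospectral (modPathAdj N M w) ⟨1, by omega⟩ ⟨N, by omega⟩ ∧
    (∃ vp : Fin (N + 2) → ℝ, vp ≠ 0 ∧ modPathAdj N M w *ᵥ vp = (0 : ℝ) • vp ∧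
      vp ⟨1, by omega⟩ = vp ⟨N, by omega⟩ ∧ vp ⟨1, by omega⟩ ≠ 0) ∧
    (∃ vm : Fin (N + 2) → ℝ, vm ≠ 0 ∧ modPathAdj N M w *ᵥ vm = (0 : ℝ) • vm ∧
      vm ⟨1, by omega⟩ = - vm ⟨N, by omega⟩ ∧ vm ⟨1, by omega⟩ ≠ 0) := by
  set ℓ : Fin (N + 2) → ℝ := fun j => leftNullVec M w j
  have hℓ : modPathAdj N M w *ᵥ ℓ = (0 : ℝ) • ℓ := by
    rw [zero_smul]
    exact modPathAdj_mulVec_leftNullVec hM1 hMe hM2 hw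
  have hℓrev : modPathAdj N M w *ᵥ (ℓ ∘ Fin.rev) = (0 : ℝ) • (ℓ ∘ Fin.rev) := by
    rw [modPathAdj_mulVec_comp_rev w (by omega), hℓ, zero_smul, zero_smul]
    rfl
  obtain ⟨⟨vp, hvp0, hvp, hvpxy, hvpx⟩, ⟨vm, hvm0, hvm, hvmxy, hvmx⟩⟩ :=
    exists_eigenvectors_of_comp (σ := Fin.rev) (x := ⟨1, by omega⟩) (y := ⟨N, by omega⟩)
      (by ext; simp) (by ext; simp) hℓ hℓrev
      ((leftNullVec_one hM1 w).trans_ne one_ne_zero) (leftNullVec_of_lt w (show M < N by omega))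
  exact ⟨not_stronglyCospectral_of_eigenvectors hvp hvpxy hvpx hvm hvmxy hvmx,
    ⟨vp, hvp0, hvp, hvpxy, hvpx⟩, ⟨vm, hvm0, hvm, hvmxy, hvmx⟩⟩
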